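/- For each term t over the complex meadow signature (0,1,i,−,+,·,⁻¹,conj) there exist real forms t₁ and t₂ with the same variables such that the equations re(t) = t₁ and im(t) = t₂ hold in every model of Md + CC + SSAV, where re(x) = (1/2)·(x + conj(x)) and im(x) = −(i/2)·(x − conj(x)). -/

import Mathlib

/-- A meadow: a commutative ring with a total inverse operation satisfying
`(x⁻¹)⁻¹ = x` and the restricted inverse law `x * (x * x⁻¹) = x`. -/
class Meadow (M : Type) extends CommRing M, Inv M where
  minv_inv : ∀ x : M, x⁻¹⁻¹ = x
  ril : ∀ x : M, x * (x * x⁻¹) = x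

/-- The Inverse Law `IL`: a cancellation meadow is a meadow satisfying it. -/
def InverseLaw (M : Type) [Meadow M] : Prop :=
  ∀ x : M, x ≠ 0 → x * x⁻¹ = 1

/-- A complex meadow (model of `Md + CC + SSAV`): a meadow with an imaginary unit
`i` and a conjugation `conj` satisfying the axioms `CC` and the scheme `SSAV`,
where `1_x = x·x⁻¹`. -/
structure IsComplexMeadow (M : Type) [Meadow M] (i : M) (conj : M → M) : Prop where
  cc0 : conj 0 = 0
  cc1 : conj 1 = 1
  cc2 : conj i = -i
  cc3 : ∀ x : M, conj (-x) = -conj x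
  cc4 : ∀ x y : M, conj (x + y) = conj x + conj y
  cc5 : ∀ x y : M, conj (x * y) = conj x * conj y
  cc6 : ∀ x : M, conj x⁻¹ = (conj x)⁻¹
  cc7 : ∀ x : M, conj (conj x) = x
  cc8 : i * i = -1
  cc9 : ∀ x : M, conj x * (conj x)⁻¹ = x * x⁻¹
  ssav : ∀ (n : ℕ) (x : Fin (n + 1) → M),
    (1 + ∑ j, x j * conj (x j)) * (1 + ∑ j, x j * conj (x j))⁻¹ = 1

/-- The real part `re(x) = (1/2)·(x + conj x)` in a complex meadow. -/
def cmRe {M : Type} [Meadow M] (conj : M → M) (x : M) : M :=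
  (1 * (2 : M)⁻¹) * (x + conj x)

/-- The imaginary part `im(x) = −(i/2)·(x − conj x)` in a complex meadow. -/
def cmIm {M : Type} [Meadow M] (i : M) (conj : M → M) (x : M) : M :=
  -(i * (2 : M)⁻¹) * (x - conj x)

/-- Terms over the complex meadow signature `(0,1,i,−,+,·,⁻¹,conj)`. -/
inductive CTerm : Type
  | var : ℕ → CTerm
  | zero : CTerm
  | one : CTerm
  | iunit : CTerm
  | neg : CTerm → CTerm
  | add : CTerm → CTerm → CTerm
  | mul : CTerm → CTerm → CTerm
  | inv : CTerm → CTerm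
  | conj : CTerm → CTerm

def CTerm.eval {M : Type} [Zero M] [One M] [Neg M] [Add M] [Mul M] [Inv M]
    (i : M) (cj : M → M) (ρ : ℕ → M) : CTerm → M
  | .var v => ρ v
  | .zero => 0
  | .one => 1
  | .iunit => i
  | .neg t => -(t.eval i cj ρ)
  | .add s t => s.eval i cj ρ + t.eval i cj ρ
  | .mul s t => s.eval i cj ρ * t.eval i cj ρ
  | .inv t => (t.eval i cj ρ)⁻¹
  | .conj t => cj (t.eval i cj ρ)

def CTerm.vars : CTerm → Set ℕ
  | .var v => {v}
  | .zero => ∅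
  | .one => ∅
  | .iunit => ∅
  | .neg t => t.vars
  | .add s t => s.vars ∪ t.vars
  | .mul s t => s.vars ∪ t.vars
  | .inv t => t.vars
  | .conj t => t.vars

/-- Real forms: generated from `0`, `1`, `re(x)` and `im(x)` (for variables `x`)
by `−`, `⁻¹`, `+` and `·`. -/
inductive RealForm : Type
  | zero : RealForm
  | one : RealForm
  | reVar : ℕ → RealForm
  | imVar : ℕ → RealForm
  | neg : RealForm → RealForm
  | inv : RealForm → RealForm
  | add : RealForm → RealForm → RealForm
  | mul : RealForm → RealForm → RealForm

def RealForm.eval {M : Type} [Meadow M] (i : M) (cj : M → M) (ρ : ℕ → M) :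
    RealForm → M
  | .zero => 0
  | .one => 1
  | .reVar v => cmRe cj (ρ v)
  | .imVar v => cmIm i cj (ρ v)
  | .neg t => -(t.eval i cj ρ)
  | .inv t => (t.eval i cj ρ)⁻¹
  | .add s t => s.eval i cj ρ + t.eval i cj ρ
  | .mul s t => s.eval i cj ρ * t.eval i cj ρ

def RealForm.vars : RealForm → Set ℕ
  | .zero => ∅
  | .one => ∅
  | .reVar v => {v}
  | .imVar v => {v}
  | .neg t => t.vars
  | .inv t => t.vars
  | .add s t => s.vars ∪ t.vars
  | .mul s t => s.vars ∪ t.vars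

/-!
Writing `a = re a + i·im a` with `re a` and `im a` fixed by `conj`, the real and imaginary parts
of `a·b` and `a⁻¹` are read off from `(p + iq)(r + is) = (pr - qs) + i(ps + qr)` and
`(p + iq)⁻¹ = (p - iq)·(p² + q²)⁻¹`; the latter holds in a meadow because
`a⁻¹ = conj a · (a · conj a)⁻¹`, as `⁻¹` is multiplicative (quasi-inverses in a commutative ring
are unique) and `1_{conj a} = 1_a`.
The constants `1/2` in `re` and `im` behave because `SSAV` for the single element `1` gives
`2 · 2⁻¹ = 1`.
-/

theorem quasiInverse_unique {R : Type*} [CommRing R] {a z w : R}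
    (haz : a * z * a = a) (hza : z * a * z = z) (haw : a * w * a = a) (hwa : w * a * w = w) :
    z = w := by
  have h : a * z = a * w := by linear_combination w * haz - z * haw
  linear_combination -hza + z * h + w * h + hwa

namespace Meadow

variable {M : Type} [Meadow M]

theorem mul_inv_mul_self (x : M) : x * x⁻¹ * x = x := by
  linear_combination ril x

theorem inv_mul_self_mul_inv (x : M) : x⁻¹ * x * x⁻¹ = x⁻¹ := by
  have h := ril x⁻¹
  rw [minv_inv] at h
  linear_combination h

theorem mul_inv (a b : M) : (a * b)⁻¹ = a⁻¹ * b⁻¹ :=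
  quasiInverse_unique (mul_inv_mul_self (a * b))
    (inv_mul_self_mul_inv (a * b))
    (by linear_combination b * ril a + a * (a * a⁻¹) * ril b)
    (by linear_combination b⁻¹ * b * b⁻¹ * inv_mul_self_mul_inv a + a⁻¹ * inv_mul_self_mul_inv b)

end Meadow

namespace IsComplexMeadow

variable {M : Type} [Meadow M] {i : M} {cj : M → M} (h : IsComplexMeadow M i cj)
include h

theorem two_mul_inv_two : (2 : M) * 2⁻¹ = 1 := by
  simpa [h.cc1, one_add_one_eq_two] using h.ssav 0 fun _ => 1

theorem conj_inv_two : cj (2 : M)⁻¹ = 2⁻¹ := by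
  rw [h.cc6, ← one_add_one_eq_two, h.cc4, h.cc1]

theorem conj_sub (x y : M) : cj (x - y) = cj x - cj y := by
  rw [sub_eq_add_neg, h.cc4, h.cc3, sub_eq_add_neg]

theorem inv_eq_conj_mul_inv_mul_conj (a : M) : a⁻¹ = cj a * (a * cj a)⁻¹ := by
  rw [Meadow.mul_inv]
  linear_combination -a⁻¹ * h.cc9 a - Meadow.inv_mul_self_mul_inv a

theorem conj_cmRe (a : M) : cj (cmRe cj a) = cmRe cj a := by
  unfold cmRe
  rw [h.cc5, h.cc5, h.cc1, h.cc4, h.cc7, h.conj_inv_two]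
  ring

theorem conj_cmIm (a : M) : cj (cmIm i cj a) = cmIm i cj a := by
  unfold cmIm
  rw [h.cc5, h.cc3, h.cc5, h.cc2, h.conj_sub, h.cc7, h.conj_inv_two]
  ring

theorem cmRe_add_i_mul_cmIm (a : M) : cmRe cj a + i * cmIm i cj a = a := by
  unfold cmRe cmIm
  linear_combination a * h.two_mul_inv_two + (2⁻¹ * (cj a - a)) * h.cc8

theorem cmRe_sub_i_mul_cmIm (a : M) : cmRe cj a - i * cmIm i cj a = cj a := by
  unfold cmRe cmIm
  linear_combination cj a * h.two_mul_inv_two + (2⁻¹ * (a - cj a)) * h.cc8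

theorem cmRe_add_i_mul {p q : M} (hp : cj p = p) (hq : cj q = q) : cmRe cj (p + i * q) = p := by
  unfold cmRe
  rw [h.cc4, h.cc5, h.cc2, hp, hq]
  linear_combination p * h.two_mul_inv_two

theorem cmIm_add_i_mul {p q : M} (hp : cj p = p) (hq : cj q = q) :
    cmIm i cj (p + i * q) = q := by
  unfold cmIm
  rw [h.cc4, h.cc5, h.cc2, hp, hq]
  linear_combination -(i * i * q) * h.two_mul_inv_two - q * h.cc8

theorem mul_eq_cmRe_add_i_mul_cmIm (a b : M) :
    a * b = (cmRe cj a * cmRe cj b - cmIm i cj a * cmIm i cj b) +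
      i * (cmRe cj a * cmIm i cj b + cmIm i cj a * cmRe cj b) := by
  conv_lhs => rw [← h.cmRe_add_i_mul_cmIm a, ← h.cmRe_add_i_mul_cmIm b]
  linear_combination cmIm i cj a * cmIm i cj b * h.cc8

theorem inv_eq_cmRe_add_i_mul_cmIm (a : M) :
    a⁻¹ = cmRe cj a * (cmRe cj a * cmRe cj a + cmIm i cj a * cmIm i cj a)⁻¹ +
      i * -(cmIm i cj a * (cmRe cj a * cmRe cj a + cmIm i cj a * cmIm i cj a)⁻¹) := by
  have hnorm : a * cj a = cmRe cj a * cmRe cj a + cmIm i cj a * cmIm i cj a := by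
    linear_combination -(cmRe cj a - i * cmIm i cj a) * h.cmRe_add_i_mul_cmIm a
      - a * h.cmRe_sub_i_mul_cmIm a - cmIm i cj a * cmIm i cj a * h.cc8
  rw [h.inv_eq_conj_mul_inv_mul_conj a, hnorm, ← h.cmRe_sub_i_mul_cmIm a]
  ring

theorem cmRe_mul (a b : M) :
    cmRe cj (a * b) = cmRe cj a * cmRe cj b - cmIm i cj a * cmIm i cj b := by
  rw [h.mul_eq_cmRe_add_i_mul_cmIm a b, h.cmRe_add_i_mul] <;>
    simp only [h.cc4, h.cc5, h.conj_sub, h.conj_cmRe, h.conj_cmIm]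

theorem cmIm_mul (a b : M) :
    cmIm i cj (a * b) = cmRe cj a * cmIm i cj b + cmIm i cj a * cmRe cj b := by
  rw [h.mul_eq_cmRe_add_i_mul_cmIm a b, h.cmIm_add_i_mul] <;>
    simp only [h.cc4, h.cc5, h.conj_sub, h.conj_cmRe, h.conj_cmIm]

theorem cmRe_inv (a : M) :
    cmRe cj a⁻¹ = cmRe cj a * (cmRe cj a * cmRe cj a + cmIm i cj a * cmIm i cj a)⁻¹ := by
  rw [h.inv_eq_cmRe_add_i_mul_cmIm a, h.cmRe_add_i_mul] <;>
    simp only [h.cc3, h.cc4, h.cc5, h.cc6, h.conj_cmRe, h.conj_cmIm]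

theorem cmIm_inv (a : M) :
    cmIm i cj a⁻¹ = -(cmIm i cj a * (cmRe cj a * cmRe cj a + cmIm i cj a * cmIm i cj a)⁻¹) := by
  rw [h.inv_eq_cmRe_add_i_mul_cmIm a, h.cmIm_add_i_mul] <;>
    simp only [h.cc3, h.cc4, h.cc5, h.cc6, h.conj_cmRe, h.conj_cmIm]

theorem cmRe_neg (a : M) : cmRe cj (-a) = -cmRe cj a := by
  unfold cmRe; rw [h.cc3]; ring

theorem cmIm_neg (a : M) : cmIm i cj (-a) = -cmIm i cj a := by
  unfold cmIm; rw [h.cc3]; ring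

theorem cmRe_add (a b : M) : cmRe cj (a + b) = cmRe cj a + cmRe cj b := by
  unfold cmRe; rw [h.cc4]; ring

theorem cmIm_add (a b : M) : cmIm i cj (a + b) = cmIm i cj a + cmIm i cj b := by
  unfold cmIm; rw [h.cc4]; ring

theorem cmRe_conj (a : M) : cmRe cj (cj a) = cmRe cj a := by
  unfold cmRe; rw [h.cc7]; ring

theorem cmIm_conj (a : M) : cmIm i cj (cj a) = -cmIm i cj a := by
  unfold cmIm; rw [h.cc7]; ring

theorem cmRe_zero : cmRe cj (0 : M) = 0 := by
  unfold cmRe; rw [h.cc0]; ring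

theorem cmIm_zero : cmIm i cj (0 : M) = 0 := by
  unfold cmIm; rw [h.cc0]; ring

theorem cmRe_one : cmRe cj (1 : M) = 1 := by
  unfold cmRe; rw [h.cc1]
  linear_combination h.two_mul_inv_two

theorem cmIm_one : cmIm i cj (1 : M) = 0 := by
  unfold cmIm; rw [h.cc1]; ring

theorem cmRe_i : cmRe cj i = 0 := by
  unfold cmRe; rw [h.cc2]; ring

theorem cmIm_i : cmIm i cj i = 1 := by
  unfold cmIm; rw [h.cc2]
  linear_combination h.two_mul_inv_two - 2 * 2⁻¹ * h.cc8

end IsComplexMeadow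

mutual

def CTerm.reForm : CTerm → RealForm
  | .var v => .reVar v
  | .zero => .zero
  | .one => .one
  | .iunit => .zero
  | .neg t => .neg t.reForm
  | .add a b => .add a.reForm b.reForm
  | .mul a b => .add (.mul a.reForm b.reForm) (.neg (.mul a.imForm b.imForm))
  | .inv t => .mul t.reForm (.inv (.add (.mul t.reForm t.reForm) (.mul t.imForm t.imForm)))
  | .conj t => t.reForm

def CTerm.imForm : CTerm → RealForm
  | .var v => .imVar v
  | .zero => .zero
  | .one => .zero
  | .iunit => .one
  | .neg t => .neg t.imForm
  | .add a b => .add a.imForm b.imForm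
  | .mul a b => .add (.mul a.reForm b.imForm) (.mul a.imForm b.reForm)
  | .inv t =>
    .neg (.mul t.imForm (.inv (.add (.mul t.reForm t.reForm) (.mul t.imForm t.imForm))))
  | .conj t => .neg t.imForm

end

theorem CTerm.vars_reForm_and_vars_imForm (t : CTerm) :
    t.reForm.vars = t.vars ∧ t.imForm.vars = t.vars := by
  induction t with
  | var | zero | one | iunit => exact ⟨rfl, rfl⟩
  | neg t ih | conj t ih | inv t ih =>
    simp only [CTerm.reForm, CTerm.imForm, RealForm.vars, CTerm.vars, ih.1, ih.2, Set.union_self,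
      and_self]
  | add a b iha ihb | mul a b iha ihb =>
    simp only [CTerm.reForm, CTerm.imForm, RealForm.vars, CTerm.vars, iha.1, iha.2, ihb.1, ihb.2,
      Set.union_self, and_self]

theorem CTerm.cmRe_eval_and_cmIm_eval {M : Type} [Meadow M] {i : M} {cj : M → M}
    (h : IsComplexMeadow M i cj) (ρ : ℕ → M) (t : CTerm) :
    cmRe cj (t.eval i cj ρ) = t.reForm.eval i cj ρ ∧
      cmIm i cj (t.eval i cj ρ) = t.imForm.eval i cj ρ := by
  induction t with
  | var => exact ⟨rfl, rfl⟩
  | zero => exact ⟨h.cmRe_zero, h.cmIm_zero⟩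
  | one => exact ⟨h.cmRe_one, h.cmIm_one⟩
  | iunit => exact ⟨h.cmRe_i, h.cmIm_i⟩
  | neg t ih | conj t ih | inv t ih =>
    simp only [CTerm.eval, CTerm.reForm, CTerm.imForm, RealForm.eval, h.cmRe_neg, h.cmIm_neg,
      h.cmRe_conj, h.cmIm_conj, h.cmRe_inv, h.cmIm_inv, ih.1, ih.2, and_self]
  | add a b iha ihb | mul a b iha ihb =>
    simp only [CTerm.eval, CTerm.reForm, CTerm.imForm, RealForm.eval, h.cmRe_add, h.cmIm_add,
      h.cmRe_mul, h.cmIm_mul, sub_eq_add_neg, iha.1, iha.2, ihb.1, ihb.2, and_self]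

/-- for every complex meadow term `t` there are real forms `t₁`, `t₂`
with the same variables such that `re(t) = t₁` and `im(t) = t₂` hold in every model
of `Md + CC + SSAV`. -/
theorem exists_real_forms (t : CTerm) :
    ∃ t₁ t₂ : RealForm, t₁.vars = t.vars ∧ t₂.vars = t.vars ∧
      ∀ (M : Type) [Meadow M] (i : M) (cj : M → M), IsComplexMeadow M i cj →
        ∀ ρ : ℕ → M,
          cmRe cj (t.eval i cj ρ) = t₁.eval i cj ρ ∧
          cmIm i cj (t.eval i cj ρ) = t₂.eval i cj ρ :=
  ⟨t.reForm, t.imForm, t.vars_reForm_and_vars_imForm.1, t.vars_reForm_and_vars_imForm.2,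
    fun _ _ _ _ h ρ => t.cmRe_eval_and_cmIm_eval h ρ⟩
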